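/- arXiv:2203.11750 — 4 statements merged into one kernel-verified Lean document; each statement's English description precedes it below -/
import Mathlib

section
/- Let Y → X be a continuous map of Hausdorff topological spaces with Y locally compact. Let Z ⊆ X be a subspace and let W ⊆ Y_Z (the preimage of Z in Y) be a subset that is clopen in Y_Z and compact. Then there exist an open subspace V of X containing Z and a subspace W' of the preimage of V in Y such that: (1) W' ∩ Y_Z = W; (2) W' is open in Y; (3) the induced map W' → V is a proper map of topological spaces. -/
/-- Let `f : Y → X` be a continuous map of Hausdorff topological spaces with `Y`
locally compact.  Let `Z ⊆ X` be a subspace and let `W ⊆ Y_Z = f⁻¹(Z)` be clopen in `Y_Z`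
and compact.  Then there exist an open `V ⊆ X` containing `Z` and a subset `W'` of `f⁻¹(V)`
such that (1) `W' ∩ Y_Z = W`, (2) `W'` is open in `Y`, and (3) the induced map `W' → V` is
proper (preimages of compact subsets of `V` are compact). -/
theorem stmt3 {X Y : Type*} [TopologicalSpace X] [TopologicalSpace Y]
    [T2Space X] [T2Space Y] [LocallyCompactSpace Y]
    (f : Y → X) (hf : Continuous f)
    (Z : Set X) (W : Set Y) (hWZ : W ⊆ f ⁻¹' Z)
    (hWclopen : IsClopen {y : f ⁻¹' Z | (y : Y) ∈ W})
    (hWcpt : IsCompact W) :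
    ∃ (V : Set X) (W' : Set Y),
      IsOpen V ∧ Z ⊆ V ∧ W' ⊆ f ⁻¹' V ∧
      W' ∩ f ⁻¹' Z = W ∧
      IsOpen W' ∧
      ∀ C : Set X, C ⊆ V → IsCompact C → IsCompact (W' ∩ f ⁻¹' C) := by
  -- W is open in Y_Z: extract an open O ⊆ Y with O ∩ f⁻¹'Z = W
  obtain ⟨O, hO, hOW⟩ := isOpen_induced_iff.mp hWclopen.2
  have key : ∀ y, y ∈ f ⁻¹' Z → (y ∈ O ↔ y ∈ W) := by
    intro y hy
    have := Set.ext_iff.mp hOW ⟨y, hy⟩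
    simpa using this
  have hWO : W ⊆ O := fun y hy => (key y (hWZ hy)).mpr hy
  obtain ⟨L, hLc, hWL, hLO⟩ := exists_compact_between hWcpt hO hWO
  set U : Set Y := interior L with hU
  have hUopen : IsOpen U := isOpen_interior
  set K : Set Y := closure U with hKdef
  have hKL : K ⊆ L := closure_minimal interior_subset hLc.isClosed
  have hK : IsCompact K := hLc.of_isClosed_subset isClosed_closure hKL
  have hUK : U ⊆ K := subset_closure
  set T : Set Y := K \ U with hTdef
  have hT : IsCompact T := hK.diff hUopen
  refine ⟨(f '' T)ᶜ, U ∩ f ⁻¹' (f '' T)ᶜ, (hT.image hf).isClosed.isOpen_compl, ?_, ?_, ?_,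
    hUopen.inter ((hT.image hf).isClosed.isOpen_compl.preimage hf), ?_⟩
  · -- Z ⊆ V
    intro x hx hxT
    obtain ⟨y, hyT, rfl⟩ := hxT
    have hyO : y ∈ O := hLO (hKL hyT.1)
    have hyW : y ∈ W := (key y hx).mp hyO
    exact hyT.2 (hWL hyW)
  · exact Set.inter_subset_right
  · -- W' ∩ f⁻¹' Z = W
    ext y
    constructor
    · rintro ⟨⟨hyU, _⟩, hyZ⟩
      exact (key y hyZ).mp (hLO (hKL (hUK hyU)))
    · intro hyW
      refine ⟨⟨hWL hyW, ?_⟩, hWZ hyW⟩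
      rintro ⟨z, hzT, hzeq⟩
      have hzO : z ∈ O := hLO (hKL hzT.1)
      have hzW : z ∈ W := (key z (by rw [Set.mem_preimage, hzeq]; exact hWZ hyW)).mp hzO
      exact hzT.2 (hWL hzW)
  · -- properness
    intro C hCV hC
    have heq : U ∩ f ⁻¹' (f '' T)ᶜ ∩ f ⁻¹' C = K ∩ f ⁻¹' C := by
      ext y
      constructor
      · rintro ⟨⟨hyU, _⟩, hyC⟩
        exact ⟨hUK hyU, hyC⟩
      · rintro ⟨hyK, hyC⟩
        have hyU : y ∈ U := by
          by_contra hyU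
          exact hCV hyC ⟨y, ⟨hyK, hyU⟩, rfl⟩
        exact ⟨⟨hyU, fun hmem => hCV hyC hmem⟩, hyC⟩
    rw [heq]
    exact hK.inter_right (hC.isClosed.preimage hf)
end

section
/- Let {X_i} be a cofiltered inverse system of nonempty connected spectral spaces with quasi-compact transition maps. Then the inverse limit X = lim X_i is nonempty and connected. -/
/-!
Give every `X_i` its constructible topology, generated by the quasi-compact opens and their
complements. It is compact Hausdorff and finer than the original topology, and quasi-compact maps
stay continuous for it. Kőnig's lemma for cofiltered systems of compact Hausdorff spaces then
shows that the limit is nonempty and compact, and that a constructible `E ⊆ X_k` whose preimage in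
every `X_j → X_k` is nonempty contains the image of some point of the limit.

If `u` is clopen in the limit, compactness writes `u` and `uᶜ` as preimages of quasi-compact opens
`U`, `V` of one `X_l`. If both are nonempty, connectedness of each `X_j` makes
`E = (U ∩ V) ∪ (U ∪ V)ᶜ` meet the image of every `X_j → X_l`, so some point of the limit lies in
both or neither of `u`, `uᶜ`, which is absurd.
-/

open CategoryTheory

universe u

/-- A topological space is *spectral* if it is quasi-compact, `T0`, sober, quasi-separated
(quasi-compact opens are closed under finite intersections) and has a basis of quasi-compact
open subsets. -/
def IsSpectralTop (α : Type u) [TopologicalSpace α] : Prop :=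
  CompactSpace α ∧ T0Space α ∧ QuasiSober α ∧ QuasiSeparatedSpace α ∧
    ∀ (x : α) (U : Set α), IsOpen U → x ∈ U →
      ∃ V : Set α, IsOpen V ∧ IsCompact V ∧ x ∈ V ∧ V ⊆ U

/-- A continuous map is *quasi-compact* if preimages of quasi-compact opens are
quasi-compact. -/
def IsQuasiCompactMap {α β : Type*} [TopologicalSpace α] [TopologicalSpace β]
    (f : α → β) : Prop :=
  ∀ U : Set β, IsOpen U → IsCompact U → IsCompact (f ⁻¹' U)

variable {J : Type u} [SmallCategory J] [IsCofiltered J]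

/-- The inverse limit of an inverse system of topological spaces, as a subspace of the
product. -/
def InvLimit (F : J ⥤ TopCat.{u}) : Type u :=
  {x : ∀ j : J, F.obj j // ∀ {i j : J} (f : i ⟶ j), (F.map f) (x i) = x j}

instance (F : J ⥤ TopCat.{u}) : TopologicalSpace (InvLimit F) := by
  unfold InvLimit; infer_instance

open Topology TopologicalSpace

section Constructible

variable {X Y : Type*} [TopologicalSpace X] [TopologicalSpace Y]

lemma IsCompact.isClosed_constructibleTopology_of_isOpen {s : Set X} (hs : IsCompact s)
    (ho : IsOpen s) : IsClosed[constructibleTopology X] s :=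
  @IsClosed.mk X (constructibleTopology X) s
    (IsCompact.isOpen_constructibleTopology_of_isClosed (by rwa [compl_compl]) ho.isClosed_compl)

namespace WithConstructibleTopology

open WithTopology

lemma isClopen_preimage_ofTopology {s : Set X} (hs : IsCompact s) (ho : IsOpen s) :
    IsClopen (ofTopology ⁻¹' s : Set (WithConstructibleTopology X)) :=
  ⟨isClosed_iff.mpr (hs.isClosed_constructibleTopology_of_isOpen ho),
    isOpen_iff.mpr (hs.isOpen_constructibleTopology_of_isOpen ho)⟩

lemma continuous_ofTopology [PrespectralSpace X] :
    Continuous (ofTopology : WithConstructibleTopology X → X) :=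
  PrespectralSpace.isTopologicalBasis.continuous_iff.mpr fun _ hs =>
    (isClopen_preimage_ofTopology hs.2 hs.1).isOpen

instance [T0Space X] [PrespectralSpace X] : T2Space (WithConstructibleTopology X) := by
  have separate : ∀ {x y : WithConstructibleTopology X} {U : Set X}, IsOpen U →
      ofTopology x ∈ U → ofTopology y ∉ U → ∃ V : Set (WithConstructibleTopology X),
      IsClopen V ∧ x ∈ V ∧ y ∉ V := by
    intro x y U hU hx hy
    obtain ⟨V, ⟨hVo, hVc⟩, hxV, hVU⟩ :=
      PrespectralSpace.isTopologicalBasis.exists_subset_of_mem_open hx hU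
    exact ⟨_, isClopen_preimage_ofTopology hVc hVo, hxV, fun h => hy (hVU h)⟩
  refine ⟨fun x y hxy => ?_⟩
  obtain ⟨U, hU, ⟨hx, hy⟩ | ⟨hy, hx⟩⟩ :=
    exists_isOpen_xor_mem ((ofTopology_injective _).ne hxy)
  · obtain ⟨V, hV, hxV, hyV⟩ := separate hU hx hy
    exact ⟨V, Vᶜ, hV.isOpen, hV.compl.isOpen, hxV, hyV, disjoint_compl_right⟩
  · obtain ⟨V, hV, hyV, hxV⟩ := separate hU hy hx
    exact ⟨Vᶜ, V, hV.compl.isOpen, hV.isOpen, hxV, hyV, disjoint_compl_left⟩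

end WithConstructibleTopology

lemma IsQuasiCompactMap.continuous_withConstructibleTopology {f : X → Y} (hf : Continuous f)
    (hqc : IsQuasiCompactMap f) :
    Continuous fun x : WithConstructibleTopology X =>
      WithTopology.toTopology (constructibleTopology Y) (f x.ofTopology) := by
  have hcons : Continuous[constructibleTopology X, constructibleTopology Y] f := by
    refine continuous_generateFrom_iff.mpr ?_
    rintro s (⟨hso, hsc⟩ | ⟨hsc, hsc'⟩)
    · exact (hqc s hso hsc).isOpen_constructibleTopology_of_isOpen (hso.preimage hf)
    · exact IsCompact.isOpen_constructibleTopology_of_isClosed (hqc _ hsc.isOpen_compl hsc')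
        (hsc.preimage hf)
  exact ⟨fun s hs => @Continuous.isOpen_preimage _ _ (constructibleTopology X)
    (constructibleTopology Y) f hcons _ hs⟩

end Constructible

lemma IsSpectralTop.spectralSpace {X : Type u} [TopologicalSpace X] (h : IsSpectralTop X) :
    SpectralSpace X :=
  have ⟨_, _, _, _, hbasis⟩ := h
  { toPrespectralSpace := .of_isTopologicalBasis (B := {U : Set X | IsOpen U ∧ IsCompact U})
      (isTopologicalBasis_of_isOpen_of_nhds (fun _ h => h.1) fun x U hx hU => by
        obtain ⟨V, hVo, hVc, hxV, hVU⟩ := hbasis x U hU hx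
        exact ⟨V, ⟨hVo, hVc⟩, hxV, hVU⟩)
      fun _ h => h.2 }

namespace CategoryTheory

lemma IsCofiltered.exists_comp_eq_of_finset {C : Type*} [Category C] [IsCofiltered C] {j k : C}
    (s : Finset (j ⟶ k)) : ∃ (m : C) (e : m ⟶ j) (h : m ⟶ k), ∀ f ∈ s, e ≫ f = h := by
  classical
  let O : Finset C := {j, k}
  let H : Finset (Σ' (X Y : C) (_ : X ∈ O) (_ : Y ∈ O), X ⟶ Y) :=
    s.image fun f => ⟨j, k, by simp [O], by simp [O], f⟩
  exact ⟨IsCofiltered.inf O H, IsCofiltered.infTo O H (by simp [O]),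
    IsCofiltered.infTo O H (by simp [O]),
    fun f hf => IsCofiltered.infTo_commutes O H _ _ (Finset.mem_image_of_mem _ hf)⟩

end CategoryTheory

namespace TopCat

def restrictFunctor {C : Type*} [Category C] (G : C ⥤ TopCat.{u}) (S : ∀ j, Set (G.obj j))
    (hS : ∀ {i j : C} (f : i ⟶ j), Set.MapsTo (G.map f) (S i) (S j)) : C ⥤ TopCat.{u} where
  obj j := TopCat.of (S j)
  map f := TopCat.ofHom ⟨(hS f).restrict, (G.map f).hom.continuous.restrict (hS f)⟩
  map_id j := by
    ext x
    change G.map (𝟙 j) x.1 = x.1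
    simp
  map_comp f g := by
    ext x
    change G.map (f ≫ g) x.1 = G.map g (G.map f x.1)
    simp

lemma compactSpace_limitCone {C : Type u} [SmallCategory C] (G : C ⥤ TopCat.{u})
    [∀ j, CompactSpace (G.obj j)] [∀ j, T2Space (G.obj j)] :
    CompactSpace (TopCat.limitCone G).pt := by
  change CompactSpace {x : ∀ j, G.obj j | ∀ {i j : C} (f : i ⟶ j), G.map f (x i) = x j}
  rw [← isCompact_iff_compactSpace]
  refine IsClosed.isCompact ?_
  simp only [Set.ofPred_forall]
  exact isClosed_iInter fun i => isClosed_iInter fun j => isClosed_iInter fun f =>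
    isClosed_eq ((G.map f).hom.continuous.comp (continuous_apply i)) (continuous_apply j)

theorem exists_limitCone_mem_of_preimage_nonempty (G : J ⥤ TopCat.{u})
    [∀ j, CompactSpace (G.obj j)] [∀ j, T2Space (G.obj j)] {k : J} {E : Set (G.obj k)}
    (hE : IsClosed E) (hne : ∀ (j : J) (f : j ⟶ k), (G.map f ⁻¹' E).Nonempty) :
    ∃ x : (TopCat.limitCone G).pt, x.1 k ∈ E := by
  -- Pass to the subsystem of points all of whose images in `G.obj k` lie in `E`. Its stages are
  -- nonempty by compactness, since finitely many arrows `j ⟶ k` are equalized further down.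
  let S : ∀ j, Set (G.obj j) := fun j => ⋂ f : j ⟶ k, G.map f ⁻¹' E
  have hS_closed (j : J) : IsClosed (S j) :=
    isClosed_iInter fun f => hE.preimage (G.map f).hom.continuous
  have hS_nonempty (j : J) : (S j).Nonempty := by
    rw [← Set.univ_inter (S j)]
    exact isCompact_univ.inter_iInter_nonempty (fun f : j ⟶ k => G.map f ⁻¹' E)
      (fun f => hE.preimage (G.map f).hom.continuous) fun s => by
        obtain ⟨m, e, h, he⟩ := IsCofiltered.exists_comp_eq_of_finset s
        obtain ⟨z, hz⟩ := hne m h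
        refine ⟨G.map e z, Set.mem_univ _, Set.mem_iInter₂.mpr fun f hf => ?_⟩
        rwa [Set.mem_preimage, ← ConcreteCategory.comp_apply, ← G.map_comp, he f hf]
  have hS_mapsTo {i j : J} (g : i ⟶ j) : Set.MapsTo (G.map g) (S i) (S j) := fun x hx =>
    Set.mem_iInter.mpr fun f => by
      simpa using Set.mem_iInter.mp hx (g ≫ f)
  have (j : J) : CompactSpace ((restrictFunctor G S hS_mapsTo).obj j) :=
    isCompact_iff_compactSpace.mp (hS_closed j).isCompact
  have (j : J) : T2Space ((restrictFunctor G S hS_mapsTo).obj j) :=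
    inferInstanceAs (T2Space (S j))
  have (j : J) : Nonempty ((restrictFunctor G S hS_mapsTo).obj j) := (hS_nonempty j).to_subtype
  obtain ⟨y⟩ := TopCat.nonempty_limitCone_of_compact_t2_cofiltered_system.{u}
    (restrictFunctor G S hS_mapsTo)
  refine ⟨⟨fun j => (y.1 j).1, fun f => congrArg Subtype.val (y.2 f)⟩, ?_⟩
  simpa using Set.mem_iInter.mp (y.1 k).2 (𝟙 k)

end TopCat

lemma PreconnectedSpace.nonempty_inter_union_compl_union {X : Type*} [TopologicalSpace X]
    [PreconnectedSpace X] {U V : Set X} (hU : IsOpen U) (hV : IsOpen V) (hUne : U.Nonempty)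
    (hVne : V.Nonempty) : (U ∩ V ∪ (U ∪ V)ᶜ).Nonempty := by
  by_cases hcover : U ∪ V = Set.univ
  · obtain ⟨x, -, hx⟩ := isPreconnected_univ U V hU hV hcover.ge (by simpa) (by simpa)
    exact ⟨x, Or.inl hx⟩
  · obtain ⟨x, hx⟩ := (Set.ne_univ_iff_exists_notMem _).mp hcover
    exact ⟨x, Or.inr hx⟩

lemma CategoryTheory.Limits.Cone.preimage_π_app_preimage_map {C : Type*} [Category C]
    {F : C ⥤ TopCat.{u}} (c : Limits.Cone F) {i j : C} (g : i ⟶ j) (V : Set (F.obj j)) :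
    c.π.app i ⁻¹' (F.map g ⁻¹' V) = c.π.app j ⁻¹' V := by
  rw [← Set.preimage_comp, ← TopCat.coe_comp, c.w g]

section SpectralSystem

open WithTopology

def constructibleFunctor {C : Type*} [Category C] (F : C ⥤ TopCat.{u})
    (hqc : ∀ {i j : C} (f : i ⟶ j), IsQuasiCompactMap (F.map f)) : C ⥤ TopCat.{u} where
  obj j := TopCat.of (WithConstructibleTopology (F.obj j))
  map f := TopCat.ofHom ⟨_, (hqc f).continuous_withConstructibleTopology (F.map f).hom.continuous⟩
  map_id j := by
    ext x
    change F.map (𝟙 j) x.ofTopology = x.ofTopology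
    simp
  map_comp f g := by
    ext x
    change F.map (f ≫ g) x.ofTopology = F.map g (F.map f x.ofTopology)
    simp

instance {C : Type*} [Category C] (F : C ⥤ TopCat.{u}) [∀ j, SpectralSpace (F.obj j)]
    (hqc : ∀ {i j : C} (f : i ⟶ j), IsQuasiCompactMap (F.map f)) (j : C) :
    CompactSpace ((constructibleFunctor F hqc).obj j) :=
  inferInstanceAs (CompactSpace (WithConstructibleTopology (F.obj j)))

instance {C : Type*} [Category C] (F : C ⥤ TopCat.{u}) [∀ j, SpectralSpace (F.obj j)]
    (hqc : ∀ {i j : C} (f : i ⟶ j), IsQuasiCompactMap (F.map f)) (j : C) :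
    T2Space ((constructibleFunctor F hqc).obj j) :=
  inferInstanceAs (T2Space (WithConstructibleTopology (F.obj j)))

def limitConeOfConstructible {C : Type u} [SmallCategory C] (F : C ⥤ TopCat.{u})
    (hqc : ∀ {i j : C} (f : i ⟶ j), IsQuasiCompactMap (F.map f))
    (x : (TopCat.limitCone (constructibleFunctor F hqc)).pt) :
    (TopCat.limitCone F).pt :=
  ⟨fun j => (x.1 j).ofTopology, fun f => congrArg ofTopology (x.2 f)⟩

lemma compactSpace_limitCone_of_spectralSpace {C : Type u} [SmallCategory C] (F : C ⥤ TopCat.{u})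
    [∀ j, SpectralSpace (F.obj j)] (hqc : ∀ {i j : C} (f : i ⟶ j), IsQuasiCompactMap (F.map f)) :
    CompactSpace (TopCat.limitCone F).pt := by
  have := TopCat.compactSpace_limitCone (constructibleFunctor F hqc)
  have hcont : Continuous (limitConeOfConstructible F hqc) :=
    Continuous.subtype_mk (continuous_pi fun j =>
      WithConstructibleTopology.continuous_ofTopology.comp
        ((continuous_apply j).comp continuous_subtype_val)) _
  refine Function.Surjective.compactSpace hcont fun x => ?_
  exact ⟨⟨fun j => toTopology _ (x.1 j), fun f => congrArg (toTopology _) (x.2 f)⟩, rfl⟩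

end SpectralSystem

section SpectralLimit

open WithTopology

variable (F : J ⥤ TopCat.{u}) [∀ j, SpectralSpace (F.obj j)]

lemma exists_limitCone_mem_of_isClosed_constructible
    (hqc : ∀ {i j : J} (f : i ⟶ j), IsQuasiCompactMap (F.map f)) {k : J} {E : Set (F.obj k)}
    (hE : IsClosed (ofTopology ⁻¹' E : Set (WithConstructibleTopology (F.obj k))))
    (hne : ∀ (j : J) (f : j ⟶ k), (F.map f ⁻¹' E).Nonempty) :
    ∃ x : (TopCat.limitCone F).pt, x.1 k ∈ E := by
  obtain ⟨x, hx⟩ := TopCat.exists_limitCone_mem_of_preimage_nonempty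
    (constructibleFunctor F hqc) (E := ofTopology ⁻¹' E) hE fun j f =>
      let ⟨z, hz⟩ := hne j f
      ⟨toTopology _ z, hz⟩
  exact ⟨limitConeOfConstructible F hqc x, hx⟩

lemma nonempty_limitCone_of_spectralSpace [∀ j, Nonempty (F.obj j)]
    (hqc : ∀ {i j : J} (f : i ⟶ j), IsQuasiCompactMap (F.map f)) :
    Nonempty (TopCat.limitCone F).pt := by
  obtain ⟨k⟩ := IsCofiltered.nonempty (C := J)
  obtain ⟨x, -⟩ := exists_limitCone_mem_of_isClosed_constructible F hqc (k := k)
    (E := Set.univ) isClosed_univ fun j _ => Set.univ_nonempty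
  exact ⟨x⟩

lemma exists_isCompact_isOpen_eq_preimage_π
    (hqc : ∀ {i j : J} (f : i ⟶ j), IsQuasiCompactMap (F.map f))
    {u : Set (TopCat.limitCone F).pt} (huc : IsCompact u) (huo : IsOpen u) :
    ∃ (l : J) (U : Set (F.obj l)), IsOpen U ∧ IsCompact U ∧
      u = (TopCat.limitCone F).π.app l ⁻¹' U := by
  let c := TopCat.limitCone F
  have hbasis := TopCat.isTopologicalBasis_cofiltered_limit F c (TopCat.limitConeIsLimit F)
    (fun _ => {U | IsOpen U ∧ IsCompact U}) (fun _ => PrespectralSpace.isTopologicalBasis)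
    (fun _ => ⟨isOpen_univ, isCompact_univ⟩)
    (fun _ _ _ h₁ h₂ =>
      ⟨h₁.1.inter h₂.1, QuasiSeparatedSpace.inter_isCompact _ _ h₁.1 h₁.2 h₂.1 h₂.2⟩)
    (fun _ _ f _ hV => ⟨hV.1.preimage (F.map f).hom.continuous, hqc f _ hV.1 hV.2⟩)
  let ι := {p : Σ j, Set (F.obj j) // IsOpen p.2 ∧ IsCompact p.2 ∧ c.π.app p.1 ⁻¹' p.2 ⊆ u}
  let cover : ι → Set c.pt := fun p => c.π.app p.1.1 ⁻¹' p.1.2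
  obtain ⟨j₀⟩ := IsCofiltered.nonempty (C := J)
  have : Nonempty ι := ⟨⟨⟨j₀, ∅⟩, isOpen_empty, isCompact_empty, by simp⟩⟩
  have hcover : u ⊆ ⋃ p, cover p := fun x hx => by
    obtain ⟨_, ⟨j, V, hV, rfl⟩, hxV, hVu⟩ := hbasis.exists_subset_of_mem_open hx huo
    exact Set.mem_iUnion.mpr ⟨⟨⟨j, V⟩, hV.1, hV.2, hVu⟩, hxV⟩
  have hdirected : Directed (· ⊆ ·) cover := by
    rintro ⟨⟨j₁, V₁⟩, hV₁o, hV₁c, hV₁u⟩ ⟨⟨j₂, V₂⟩, hV₂o, hV₂c, hV₂u⟩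
    obtain ⟨m, g₁, g₂, -⟩ := IsCofilteredOrEmpty.cone_objs j₁ j₂
    have h₁ := c.preimage_π_app_preimage_map g₁ V₁
    have h₂ := c.preimage_π_app_preimage_map g₂ V₂
    refine ⟨⟨⟨m, F.map g₁ ⁻¹' V₁ ∪ F.map g₂ ⁻¹' V₂⟩,
      (hV₁o.preimage (F.map g₁).hom.continuous).union (hV₂o.preimage (F.map g₂).hom.continuous),
      (hqc g₁ _ hV₁o hV₁c).union (hqc g₂ _ hV₂o hV₂c), ?_⟩, ?_, ?_⟩
    · simpa only [Set.preimage_union, h₁, h₂] using Set.union_subset hV₁u hV₂u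
    · simp only [cover, Set.preimage_union, h₁, h₂, Set.subset_union_left]
    · simp only [cover, Set.preimage_union, h₁, h₂, Set.subset_union_right]
  obtain ⟨⟨⟨l, U⟩, hUo, hUc, hUu⟩, hu⟩ :=
    huc.elim_directed_cover cover (fun p => p.2.1.preimage (c.π.app p.1.1).hom.continuous)
      hcover hdirected
  exact ⟨l, U, hUo, hUc, hu.antisymm hUu⟩

lemma exists_isCompact_isOpen_eq_preimage_π_of_isClopen
    (hqc : ∀ {i j : J} (f : i ⟶ j), IsQuasiCompactMap (F.map f))
    {u : Set (TopCat.limitCone F).pt} (hu : IsClopen u) :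
    ∃ (l : J) (U V : Set (F.obj l)), IsOpen U ∧ IsCompact U ∧ IsOpen V ∧ IsCompact V ∧
      u = (TopCat.limitCone F).π.app l ⁻¹' U ∧ uᶜ = (TopCat.limitCone F).π.app l ⁻¹' V := by
  have := compactSpace_limitCone_of_spectralSpace F hqc
  obtain ⟨l₁, U, hUo, hUc, rfl⟩ :=
    exists_isCompact_isOpen_eq_preimage_π F hqc hu.isClosed.isCompact hu.isOpen
  obtain ⟨l₂, V, hVo, hVc, hV⟩ :=
    exists_isCompact_isOpen_eq_preimage_π F hqc hu.compl.isClosed.isCompact hu.compl.isOpen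
  obtain ⟨m, g₁, g₂, -⟩ := IsCofilteredOrEmpty.cone_objs l₁ l₂
  exact ⟨m, F.map g₁ ⁻¹' U, F.map g₂ ⁻¹' V, hUo.preimage (F.map g₁).hom.continuous,
    hqc g₁ _ hUo hUc, hVo.preimage (F.map g₂).hom.continuous, hqc g₂ _ hVo hVc,
    ((TopCat.limitCone F).preimage_π_app_preimage_map g₁ U).symm,
    hV.trans ((TopCat.limitCone F).preimage_π_app_preimage_map g₂ V).symm⟩

lemma preconnectedSpace_limitCone_of_spectralSpace [∀ j, PreconnectedSpace (F.obj j)]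
    (hqc : ∀ {i j : J} (f : i ⟶ j), IsQuasiCompactMap (F.map f)) :
    PreconnectedSpace (TopCat.limitCone F).pt := by
  refine preconnectedSpace_iff_clopen.mpr fun u hu => ?_
  by_contra! hu_proper
  obtain ⟨l, U, V, hUo, hUc, hVo, hVc, rfl, hV⟩ :=
    exists_isCompact_isOpen_eq_preimage_π_of_isClopen F hqc hu
  obtain ⟨a, haU⟩ := hu_proper.1
  obtain ⟨c, hc⟩ := (Set.ne_univ_iff_exists_notMem _).mp hu_proper.2
  have hcV : c ∈ (TopCat.limitCone F).π.app l ⁻¹' V := hV ▸ hc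
  have hU' := WithConstructibleTopology.isClopen_preimage_ofTopology hUc hUo
  have hV' := WithConstructibleTopology.isClopen_preimage_ofTopology hVc hVo
  -- No point of the limit lies over `E`, as it would lie in both or neither of `u`, `uᶜ`.
  obtain ⟨x, hx⟩ := exists_limitCone_mem_of_isClosed_constructible F hqc
    (E := U ∩ V ∪ (U ∪ V)ᶜ)
    ((hU'.isClosed.inter hV'.isClosed).union (hU'.union hV').isOpen.isClosed_compl)
    fun j f => PreconnectedSpace.nonempty_inter_union_compl_union
      (hUo.preimage (F.map f).hom.continuous) (hVo.preimage (F.map f).hom.continuous)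
      ⟨a.1 j, show F.map f (a.1 j) ∈ U by rw [a.2 f]; exact haU⟩
      ⟨c.1 j, show F.map f (c.1 j) ∈ V by rw [c.2 f]; exact hcV⟩
  have hxV_iff : x ∈ (TopCat.limitCone F).π.app l ⁻¹' V ↔ x.1 l ∉ U := by rw [← hV]; rfl
  rcases hx with ⟨hxU, hxV⟩ | hx
  · exact hxV_iff.mp hxV hxU
  · exact hx (Or.inr (hxV_iff.mpr fun hxU => hx (Or.inl hxU)))

end SpectralLimit

/-- Let `{X_i}` be a cofiltered inverse system of nonempty connected spectral
spaces with quasi-compact transition maps.  Then the inverse limit `X = lim X_i` is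
nonempty and connected. -/
theorem stmt5 (F : J ⥤ TopCat.{u})
    (hspec : ∀ j : J, IsSpectralTop (F.obj j))
    (hne : ∀ j : J, Nonempty (F.obj j))
    (hconn : ∀ j : J, ConnectedSpace (F.obj j))
    (hqc : ∀ {i j : J} (f : i ⟶ j), IsQuasiCompactMap (F.map f)) :
    Nonempty (InvLimit F) ∧ ConnectedSpace (InvLimit F) := by
  have (j : J) : SpectralSpace (F.obj j) := (hspec j).spectralSpace
  have := preconnectedSpace_limitCone_of_spectralSpace F hqc
  have := nonempty_limitCone_of_spectralSpace F hqc
  -- `InvLimit F` is definitionally the underlying space of `TopCat.limitCone F`.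
  exact ⟨this, (⟨this⟩ : ConnectedSpace (TopCat.limitCone F).pt)⟩
end

section
/- Let C be a site and let B ⊆ C be a full subcategory closed under fiber products such that every object V of C admits a covering family {U_α → V} with each U_α an object of B. Let F be a presheaf of sets on C whose restriction to B (with the induced topology) satisfies the sheaf condition for all covering families consisting of objects of B. Then for every object U of B, the natural map F(U) → F^#(U) to the sheafification is a bijection. -/
open CategoryTheory Opposite

universe u w

/-!
Since every object is covered by objects of `B`, the arrows of a covering sieve with source
in `B` still generate a covering sieve, so `F` is a sheaf for them over objects of `B`.
Two sections of `F` with the same image in `F^#` agree on a covering sieve, hence are equal.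
A section of `F^#` lifts locally on a covering sieve; on its `B`-part the local lifts are
compatible, since their images agree on fiber products, which lie in `B` where injectivity
is already known. They glue in `F`, and the glued section maps to the given one because `F^#`
is separated.
-/

namespace CategoryTheory

variable {C : Type*} [Category C]

def Sieve.restrictToObjects {W : C} (B : C → Prop) (T : Sieve W) : Presieve W :=
  fun V f => T.arrows f ∧ B V

lemma Sieve.generate_restrictToObjects_mem {J : GrothendieckTopology C} {B : C → Prop}
    (hBcov : ∀ V : C, ∃ R : Presieve V,
      (∀ ⦃W : C⦄ (f : W ⟶ V), R f → B W) ∧ Sieve.generate R ∈ J V)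
    {W : C} {T : Sieve W} (hT : T ∈ J W) :
    Sieve.generate (T.restrictToObjects B) ∈ J W := by
  refine J.transitive hT _ fun V f hf => ?_
  obtain ⟨R, hRB, hRmem⟩ := hBcov V
  refine J.superset_covering ?_ hRmem
  rintro Z g ⟨Y, e, h, hh, rfl⟩
  exact ⟨Y, e, h ≫ f, ⟨T.downward_closed hf h, hRB h hh⟩, by simp⟩

namespace Presheaf

variable {F G : Cᵒᵖ ⥤ Type w} (φ : F ⟶ G)

lemma app_injective_of_isSeparatedFor (J : GrothendieckTopology C) [IsLocallyInjective J φ]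
    {U : C} (hF : ∀ T ∈ J U, ∃ R : Presieve U, R ≤ T.arrows ∧ R.IsSeparatedFor F) :
    Function.Injective (φ.app (op U)) := by
  intro x y hxy
  obtain ⟨R, hRT, hR⟩ := hF _ (equalizerSieve_mem J φ x y hxy)
  exact hR.ext fun V f hf => hRT _ f hf

noncomputable def localPreimageFamily {U : C} (s : G.obj (op U)) {R : Presieve U}
    (hR : R ≤ (imageSieve φ s).arrows) : Presieve.FamilyOfElements F R :=
  fun _ f hf => localPreimage φ s f (hR _ f hf)

lemma app_localPreimageFamily {U : C} (s : G.obj (op U)) {R : Presieve U}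
    (hR : R ≤ (imageSieve φ s).arrows) {V : C} (f : V ⟶ U) (hf : R f) :
    φ.app (op V) (localPreimageFamily φ s hR f hf) = G.map f.op s :=
  -- elaborated before unification with the goal, which otherwise fails to unfold the family
  (app_localPreimage φ s f (hR _ f hf) :)

lemma localPreimageFamily_compatible [Limits.HasPullbacks C] {U : C} (s : G.obj (op U))
    {R : Presieve U} (hR : R ≤ (imageSieve φ s).arrows)
    (hinj : ∀ ⦃V₁ V₂ : C⦄ (f₁ : V₁ ⟶ U) (f₂ : V₂ ⟶ U), R f₁ → R f₂ →
      Function.Injective (φ.app (op (Limits.pullback f₁ f₂)))) :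
    (localPreimageFamily φ s hR).Compatible := by
  rw [Presieve.pullbackCompatible_iff]
  intro V₁ V₂ f₁ f₂ h₁ h₂
  apply hinj f₁ f₂ h₁ h₂
  simp only [NatTrans.naturality_apply, app_localPreimageFamily,
    ← Functor.map_comp_apply, ← op_comp, Limits.pullback.condition]

lemma exists_app_eq_of_isSheafFor [Limits.HasPullbacks C] {U : C} (s : G.obj (op U))
    {R : Presieve U} (hR : R ≤ (imageSieve φ s).arrows)
    (hF : R.IsSheafFor F) (hG : R.IsSeparatedFor G)
    (hinj : ∀ ⦃V₁ V₂ : C⦄ (f₁ : V₁ ⟶ U) (f₂ : V₂ ⟶ U), R f₁ → R f₂ →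
      Function.Injective (φ.app (op (Limits.pullback f₁ f₂)))) :
    ∃ t, φ.app (op U) t = s := by
  obtain ⟨t, ht, -⟩ := hF _ (localPreimageFamily_compatible φ s hR hinj)
  refine ⟨t, hG.ext fun V f hf => ?_⟩
  rw [← NatTrans.naturality_apply, ht f hf, app_localPreimageFamily]

end Presheaf

end CategoryTheory

/-- Let `C` be a site and `B ⊆ C` a full subcategory (encoded by a predicate on
objects) closed under fiber products, such that every object `V` of `C` admits a covering
family `{U_α → V}` with all `U_α` in `B`.  Let `F` be a presheaf of sets on `C` which
satisfies the sheaf condition for all covering families consisting of objects of `B`.  Then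
for every `U` in `B`, the natural map `F(U) → F^#(U)` to the sheafification is a
bijection. -/
theorem stmt6 {C : Type u} [SmallCategory C] [Limits.HasPullbacks C]
    (J : GrothendieckTopology C) (B : C → Prop)
    -- `B` is closed under fiber products
    (hBpull : ∀ {U V W : C} (f : U ⟶ W) (g : V ⟶ W),
      B U → B V → B W → B (Limits.pullback f g))
    -- every object admits a covering family with members in `B`
    (hBcov : ∀ V : C, ∃ R : Presieve V,
      (∀ ⦃W : C⦄ (f : W ⟶ V), R f → B W) ∧ Sieve.generate R ∈ J V)
    (F : Cᵒᵖ ⥤ Type u)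
    -- `F` satisfies the sheaf condition for covering families consisting of objects of `B`
    (hF : ∀ ⦃V : C⦄, B V → ∀ R : Presieve V,
      (∀ ⦃W : C⦄ (f : W ⟶ V), R f → B W) → Sieve.generate R ∈ J V →
        Presieve.IsSheafFor F R) :
    ∀ U : C, B U → Function.Bijective ((J.toSheafify F).app (op U)) := by
  have hsheaf : ∀ ⦃W : C⦄, B W → ∀ T ∈ J W, (T.restrictToObjects B).IsSheafFor F :=
    fun W hW T hT => hF hW _ (fun _ _ hf => hf.2) (Sieve.generate_restrictToObjects_mem hBcov hT)
  have hinj : ∀ W : C, B W → Function.Injective ((J.toSheafify F).app (op W)) :=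
    fun W hW => Presheaf.app_injective_of_isSeparatedFor _ J fun T hT =>
      ⟨_, fun _ _ hf => hf.1, (hsheaf hW T hT).isSeparatedFor⟩
  intro U hU
  refine ⟨hinj U hU, fun s => ?_⟩
  have hS : Presheaf.imageSieve (J.toSheafify F) s ∈ J U :=
    Presheaf.imageSieve_mem J (J.toSheafify F) s
  have hSheafify : Presieve.IsSheaf J (J.sheafify F) :=
    (isSheaf_iff_isSheaf_of_type J _).1 (J.sheafify_isSheaf F)
  exact Presheaf.exists_app_eq_of_isSheafFor _ s (fun _ _ hf => hf.1) (hsheaf hU _ hS)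
    (hSheafify.isSheafFor _ (Sieve.generate_restrictToObjects_mem hBcov hS)).isSeparatedFor
    fun _ _ f₁ f₂ h₁ h₂ => hinj _ (hBpull f₁ f₂ h₁.2 h₂.2 hU)
end

section
/- Let (C, F) be a tame infinite Galois category with fundamental group π = π₁(C, F), so that F induces an equivalence C ≃ π-Set (sets with continuous π-action). Let C' be a strictly full subcategory of C such that: (a) an object of C' is categorically connected in C' if and only if it is categorically connected in C; (b) an object of C lies in C' (up to isomorphism) if and only if all its categorically connected components lie in C'; (c) C' is closed under small colimits and finite limits in C. Then (C', F|_{C'}) is itself a tame infinite Galois category. -/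
open CategoryTheory Limits

universe v u

/-- An object `Y` of a category is *categorically connected* if every monomorphism into `Y`
from a non-initial object is an isomorphism. -/
def CategoricallyConnected {C : Type*} [Category C] (Y : C) : Prop :=
  ∀ (Z : C) (f : Z ⟶ Y), Mono f → ¬ Nonempty (IsInitial Z) → IsIso f

/-- `(C, F)` is a *tame infinite Galois category*: `C` is cocomplete and finitely complete,
every object is a coproduct of categorically connected objects, a set of connected objects
generates `C` under colimits, the fiber functor `F` is faithful, conservative, cocontinuous
and finitely continuous, and moreover the fundamental group `π₁(C, F) = Aut(F)` acts
transitively on `F X` for every categorically connected object `X` (tameness). -/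
structure IsTameInfiniteGaloisCategory (C : Type u) [Category.{v} C]
    (F : C ⥤ Type v) : Prop where
  hasColimits : HasColimits C
  hasFiniteLimits : HasFiniteLimits C
  /-- every object is a coproduct of categorically connected objects -/
  decomp : ∀ X : C, ∃ (ι : Type v) (g : ι → C) (c : Cofan g),
    Nonempty (IsColimit c) ∧ (∀ i, CategoricallyConnected (g i)) ∧ Nonempty (c.pt ≅ X)
  /-- a set of connected objects generates `C` under colimits -/
  generator : ∃ (ι : Type v) (g : ι → C), (∀ i, CategoricallyConnected (g i)) ∧
    ∀ X : C, ∃ (Jc : Type v) (_ : SmallCategory Jc) (D : Jc ⥤ C) (c : Cocone D),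
      Nonempty (IsColimit c) ∧ Nonempty (c.pt ≅ X) ∧
        ∀ j, ∃ i, Nonempty (D.obj j ≅ g i)
  faithful : F.Faithful
  conservative : F.ReflectsIsomorphisms
  cocontinuous : Nonempty (PreservesColimits F)
  finitelyContinuous : Nonempty (PreservesFiniteLimits F)
  /-- tameness: `Aut F` acts transitively on the fiber of every connected object -/
  tame : ∀ X : C, CategoricallyConnected X →
    ∀ x y : F.obj X, ∃ σ : Aut F, σ.hom.app X x = y

/-! Everything except the generator axiom is inherited from `(C, F)`: limits and colimits by
closure, decompositions into connected objects by (b) and (a), and tameness by restricting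
automorphisms of `F`. For the generator, a connected object `X` with a point in its fiber receives
a morphism `f` from a generating object `g i`, and `F.map f` is surjective by tameness. Since `F`
is conservative and exact, `f` is then the coequalizer of its kernel pair, so `X` is determined
up to isomorphism by `i` and the equivalence relation `f` induces on `F (g i)`. This yields a set
of representatives of the connected objects of `C` (those with empty fiber being initial); the
representatives lying in `C'` generate `C'`. -/

def IsCoproductOfConnected {C : Type u} [Category.{v} C] (X : C) : Prop :=
  ∃ (ι : Type v) (g : ι → C) (c : Cofan g),
    Nonempty (IsColimit c) ∧ (∀ i, CategoricallyConnected (g i)) ∧ Nonempty (c.pt ≅ X)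

lemma CategoricallyConnected.of_iso {C : Type*} [Category C] {X Y : C} (e : X ≅ Y)
    (hX : CategoricallyConnected X) : CategoricallyConnected Y := fun Z f _ hZ =>
  have := hX Z (f ≫ e.inv) inferInstance hZ
  IsIso.of_isIso_comp_right f e.inv

section FiberFunctor

variable {C : Type u} [Category.{v} C] (F : C ⥤ Type v)

lemma isInitial_of_isEmpty_obj [HasInitial C] [PreservesColimit (Functor.empty.{0} C) F]
    [F.ReflectsIsomorphisms] {X : C} (hX : IsEmpty (F.obj X)) : Nonempty (IsInitial X) := by
  have hbot : IsEmpty (F.obj (⊥_ C)) :=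
    (Types.initial_iff_empty _).1 ⟨initialIsInitial.isInitialObj F _⟩
  have : IsIso (F.map (initial.to X)) :=
    (isIso_iff_bijective _).2 ⟨fun a => hbot.elim a, fun b => hX.elim b⟩
  have : IsIso (initial.to X) := isIso_of_reflects_iso _ F
  exact ⟨initialIsInitial.ofIso (asIso (initial.to X))⟩

lemma surjective_map_of_transitive {X Y : C}
    (htr : ∀ x x' : F.obj X, ∃ σ : Aut F, σ.hom.app X x = x') (f : Y ⟶ X) (y : F.obj Y) :
    Function.Surjective (F.map f) := by
  intro x
  obtain ⟨σ, hσ⟩ := htr (F.map f y) x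
  exact ⟨σ.hom.app Y y, by rw [← hσ, NatTrans.naturality_apply]⟩

lemma exists_hom_of_generates [PreservesColimits F] {ι : Type v} (g : ι → C)
    (hgen : ∀ X : C, ∃ (Jc : Type v) (_ : SmallCategory Jc) (D : Jc ⥤ C) (c : Cocone D),
      Nonempty (IsColimit c) ∧ Nonempty (c.pt ≅ X) ∧ ∀ j, ∃ i, Nonempty (D.obj j ≅ g i))
    {X : C} (x : F.obj X) : ∃ (i : ι) (f : g i ⟶ X), x ∈ Set.range (F.map f) := by
  obtain ⟨Jc, _, D, c, ⟨hc⟩, ⟨e⟩, hD⟩ := hgen X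
  obtain ⟨j, y, hy⟩ := Types.jointly_surjective _ (isColimitOfPreserves F hc) (F.map e.inv x)
  obtain ⟨i, ⟨e'⟩⟩ := hD j
  refine ⟨i, e'.inv ≫ c.ι.app j ≫ e.hom, F.map e'.hom y, ?_⟩
  change F.map (c.ι.app j) y = F.map e.inv x at hy
  rw [← Functor.map_comp_apply, Iso.hom_inv_id_assoc, Functor.map_comp_apply, hy,
    ← Functor.map_comp_apply, Iso.inv_hom_id, Functor.map_id_apply]

noncomputable def isColimitCoforkOfSurjective [HasCoequalizers C] [F.ReflectsIsomorphisms]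
    [PreservesColimitsOfShape WalkingParallelPair F] {R G X : C} {f : G ⟶ X} {a b : R ⟶ G}
    (k : IsKernelPair f a b) [PreservesLimit (cospan f f) F]
    (hf : Function.Surjective (F.map f)) : IsColimit (Cofork.ofπ f k.w) := by
  have := reflectsColimitsOfShape_of_reflectsIsomorphisms (G := F) (J := WalkingParallelPair)
  have : Epi (F.map f) := (epi_iff_surjective _).2 hf
  exact isColimitOfReflects F
    ((isColimitMapCoconeCoforkEquiv F k.w).symm
      (IsKernelPair.toCoequalizer (k.map F) (regularEpiOfEpi _)))

variable [HasPullbacks C] [HasCoequalizers C] [F.Faithful] [F.ReflectsIsomorphisms]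
  [PreservesColimitsOfShape WalkingParallelPair F] [PreservesLimitsOfShape WalkingCospan F]

lemma exists_comp_eq_of_surjective {G X X' : C} {f : G ⟶ X} (f' : G ⟶ X')
    (hf : Function.Surjective (F.map f))
    (hker : ∀ s t, F.map f s = F.map f t → F.map f' s = F.map f' t) :
    ∃ u : X ⟶ X', f ≫ u = f' := by
  have hc := isColimitCoforkOfSurjective F (IsKernelPair.of_hasPullback f) hf
  have hw : pullback.fst f f ≫ f' = pullback.snd f f ≫ f' := by
    refine F.map_injective (ConcreteCategory.hom_ext _ _ fun r => ?_)
    simp only [Functor.map_comp_apply]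
    apply hker
    rw [← Functor.map_comp_apply, pullback.condition, Functor.map_comp_apply]
  exact ⟨Cofork.IsColimit.desc hc f' hw, Cofork.IsColimit.π_desc hc⟩

lemma nonempty_iso_of_map_eq_iff {G X X' : C} (f : G ⟶ X) (f' : G ⟶ X')
    (hf : Function.Surjective (F.map f)) (hf' : Function.Surjective (F.map f'))
    (hker : ∀ s t, F.map f s = F.map f t ↔ F.map f' s = F.map f' t) : Nonempty (X ≅ X') := by
  obtain ⟨u, hu⟩ := exists_comp_eq_of_surjective F f' hf fun s t => (hker s t).1
  obtain ⟨u', hu'⟩ := exists_comp_eq_of_surjective F f hf' fun s t => (hker s t).2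
  have : Epi f := F.epi_of_epi_map ((epi_iff_surjective _).2 hf)
  have : Epi f' := F.epi_of_epi_map ((epi_iff_surjective _).2 hf')
  exact ⟨⟨u, u', by rw [← cancel_epi f, reassoc_of% hu, hu', Category.comp_id],
    by rw [← cancel_epi f', reassoc_of% hu', hu, Category.comp_id]⟩⟩

end FiberFunctor

theorem IsTameInfiniteGaloisCategory.exists_connected_representatives {C : Type u}
    [Category.{v} C] {F : C ⥤ Type v} (hC : IsTameInfiniteGaloisCategory C F) :
    ∃ (ι : Type v) (g : ι → C), ∀ X : C, CategoricallyConnected X → ∃ i, Nonempty (X ≅ g i) := by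
  obtain ⟨_, _, -, ⟨ι₀, g₀, -, hgen⟩, _, _, ⟨_⟩, ⟨_⟩, htame⟩ := hC
  let Kernel : Type v := Σ i : ι₀, F.obj (g₀ i) → F.obj (g₀ i) → Prop
  let IsQuotientBy (p : Kernel) (Y : C) : Prop := ∃ f : g₀ p.1 ⟶ Y,
    Function.Surjective (F.map f) ∧ (fun s t => F.map f s = F.map f t) = p.2
  let g : Option {p : Kernel // ∃ Y, IsQuotientBy p Y} → C :=
    fun o => o.elim (⊥_ C) fun p => p.2.choose
  refine ⟨_, g, fun X hX => ?_⟩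
  rcases isEmpty_or_nonempty (F.obj X) with hempty | ⟨⟨x⟩⟩
  · obtain ⟨h⟩ := isInitial_of_isEmpty_obj F hempty
    exact ⟨none, ⟨h.uniqueUpToIso initialIsInitial⟩⟩
  · obtain ⟨i, f, y, -⟩ := exists_hom_of_generates F g₀ hgen x
    have hf := surjective_map_of_transitive F (htame X hX) f y
    let q : {p : Kernel // ∃ Y, IsQuotientBy p Y} :=
      ⟨⟨i, fun s t => F.map f s = F.map f t⟩, X, f, hf, rfl⟩
    obtain ⟨f', hf', hker⟩ := q.2.choose_spec
    exact ⟨some q, nonempty_iso_of_map_eq_iff F f f' hf hf' fun s t =>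
      Iff.of_eq (congrFun (congrFun hker s) t).symm⟩

section FullSubcategory

variable {C : Type u} [Category.{v} C] {P : C → Prop}

lemma isClosedUnderColimitsOfShape_of_forall_isColimit
    (hc₁ : ∀ (Jc : Type v) (_ : SmallCategory Jc) (D : Jc ⥤ C) (c : Cocone D),
      Nonempty (IsColimit c) → (∀ j, P (D.obj j)) → P c.pt)
    (J : Type v) [SmallCategory J] : ObjectProperty.IsClosedUnderColimitsOfShape P J :=
  ⟨fun _ ⟨h⟩ => hc₁ J _ h.diag _ ⟨h.isColimit⟩ h.prop_diag_obj⟩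

lemma isClosedUnderLimitsOfShape_of_forall_isLimit
    (hc₂ : ∀ (Jc : Type v) (_ : SmallCategory Jc) (_ : FinCategory Jc)
      (D : Jc ⥤ C) (c : Cone D), Nonempty (IsLimit c) → (∀ j, P (D.obj j)) → P c.pt)
    (J : Type) [SmallCategory J] [FinCategory J] : ObjectProperty.IsClosedUnderLimitsOfShape P J :=
  have : ObjectProperty.IsClosedUnderLimitsOfShape P (ULiftHom.{v} (ULift.{v} J)) :=
    ⟨fun _ ⟨h⟩ => hc₂ _ _ inferInstance h.diag _ ⟨h.isLimit⟩ h.prop_diag_obj⟩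
  .of_equivalence (ULiftHomULiftCategory.equiv J).symm

lemma hasColimits_fullSubcategory
    (hc₁ : ∀ (Jc : Type v) (_ : SmallCategory Jc) (D : Jc ⥤ C) (c : Cocone D),
      Nonempty (IsColimit c) → (∀ j, P (D.obj j)) → P c.pt) [HasColimits C] :
    HasColimits (ObjectProperty.FullSubcategory P) :=
  ⟨fun J _ => have := isClosedUnderColimitsOfShape_of_forall_isColimit hc₁ J; inferInstance⟩

lemma preservesColimits_ι
    (hc₁ : ∀ (Jc : Type v) (_ : SmallCategory Jc) (D : Jc ⥤ C) (c : Cocone D),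
      Nonempty (IsColimit c) → (∀ j, P (D.obj j)) → P c.pt) [HasColimits C] :
    PreservesColimits (ObjectProperty.ι P) :=
  ⟨fun {J} _ => have := isClosedUnderColimitsOfShape_of_forall_isColimit hc₁ J; inferInstance⟩

lemma hasFiniteLimits_fullSubcategory
    (hc₂ : ∀ (Jc : Type v) (_ : SmallCategory Jc) (_ : FinCategory Jc)
      (D : Jc ⥤ C) (c : Cone D), Nonempty (IsLimit c) → (∀ j, P (D.obj j)) → P c.pt)
    [HasFiniteLimits C] : HasFiniteLimits (ObjectProperty.FullSubcategory P) :=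
  ⟨fun J _ _ => have := isClosedUnderLimitsOfShape_of_forall_isLimit hc₂ J; inferInstance⟩

lemma preservesFiniteLimits_ι
    (hc₂ : ∀ (Jc : Type v) (_ : SmallCategory Jc) (_ : FinCategory Jc)
      (D : Jc ⥤ C) (c : Cone D), Nonempty (IsLimit c) → (∀ j, P (D.obj j)) → P c.pt)
    [HasFiniteLimits C] : PreservesFiniteLimits (ObjectProperty.ι P) :=
  ⟨fun J _ _ => have := isClosedUnderLimitsOfShape_of_forall_isLimit hc₂ J; inferInstance⟩

lemma isCoproductOfConnected_fullSubcategory [HasColimits (ObjectProperty.FullSubcategory P)]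
    [PreservesColimits (ObjectProperty.ι P)]
    (ha : ∀ X : ObjectProperty.FullSubcategory P,
      CategoricallyConnected X ↔ CategoricallyConnected X.obj)
    (hb : ∀ (X : C) (ι : Type v) (g : ι → C) (c : Cofan g),
      Nonempty (IsColimit c) → (∀ i, CategoricallyConnected (g i)) →
        Nonempty (c.pt ≅ X) → (P X ↔ ∀ i, P (g i)))
    {X : ObjectProperty.FullSubcategory P} (hX : IsCoproductOfConnected X.obj) :
    IsCoproductOfConnected X := by
  obtain ⟨ι, g, c, ⟨hc⟩, hconn, ⟨e⟩⟩ := hX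
  have hPg := (hb X.obj ι g c ⟨hc⟩ hconn ⟨e⟩).1 X.property
  let g' : ι → ObjectProperty.FullSubcategory P := fun i => ⟨g i, hPg i⟩
  refine ⟨ι, g', colimit.cocone (Discrete.functor g'), ⟨colimit.isColimit _⟩,
    fun i => (ha (g' i)).2 (hconn i), ⟨(ObjectProperty.ι P).preimageIso ?_⟩⟩
  exact IsColimit.coconePointsIsoOfNatIso
    (isColimitOfPreserves (ObjectProperty.ι P) (colimit.isColimit (Discrete.functor g'))) hc
    (Discrete.natIso fun _ => Iso.refl _) ≪≫ e

lemma exists_connected_generator_fullSubcategory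
    (hiso : ∀ {X Y : C}, Nonempty (X ≅ Y) → (P X ↔ P Y))
    (ha : ∀ X : ObjectProperty.FullSubcategory P,
      CategoricallyConnected X ↔ CategoricallyConnected X.obj)
    {ι : Type v} (g : ι → C) (hg : ∀ X : C, CategoricallyConnected X → ∃ i, Nonempty (X ≅ g i))
    (hdecomp : ∀ X : ObjectProperty.FullSubcategory P, IsCoproductOfConnected X) :
    ∃ (ι' : Type v) (g' : ι' → ObjectProperty.FullSubcategory P),
      (∀ i, CategoricallyConnected (g' i)) ∧
      ∀ X : ObjectProperty.FullSubcategory P, ∃ (Jc : Type v) (_ : SmallCategory Jc)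
        (D : Jc ⥤ ObjectProperty.FullSubcategory P) (c : Cocone D),
        Nonempty (IsColimit c) ∧ Nonempty (c.pt ≅ X) ∧ ∀ j, ∃ i, Nonempty (D.obj j ≅ g' i) := by
  refine ⟨{i // P (g i) ∧ CategoricallyConnected (g i)}, fun i => ⟨g i, i.2.1⟩,
    fun i => (ha _).2 i.2.2, fun X => ?_⟩
  obtain ⟨κ, k, c, hc, hconn, he⟩ := hdecomp X
  refine ⟨Discrete κ, inferInstance, Discrete.functor k, c, hc, he, fun ⟨j⟩ => ?_⟩
  have hkj := (ha (k j)).1 (hconn j)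
  obtain ⟨i, ⟨e⟩⟩ := hg _ hkj
  exact ⟨⟨i, (hiso ⟨e⟩).1 (k j).property, hkj.of_iso e⟩, ⟨(ObjectProperty.ι P).preimageIso e⟩⟩

end FullSubcategory

/-- Let `(C, F)` be a tame infinite Galois category and let `C'` be a strictly
full subcategory (given by an isomorphism-closed predicate `P` on objects) such that:
(a) an object of `C'` is categorically connected in `C'` iff it is so in `C`;
(b) an object of `C` lies in `C'` iff all its categorically connected components lie in `C'`;
(c) `C'` is closed under small colimits and finite limits in `C`.
Then `(C', F|_{C'})` is a tame infinite Galois category. -/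
theorem stmt15 {C : Type u} [Category.{v} C] (F : C ⥤ Type v) (P : C → Prop)
    (hiso : ∀ {X Y : C}, Nonempty (X ≅ Y) → (P X ↔ P Y))
    (hC : IsTameInfiniteGaloisCategory C F)
    (ha : ∀ X : ObjectProperty.FullSubcategory P,
      CategoricallyConnected X ↔ CategoricallyConnected X.obj)
    (hb : ∀ (X : C) (ι : Type v) (g : ι → C) (c : Cofan g),
      Nonempty (IsColimit c) → (∀ i, CategoricallyConnected (g i)) →
        Nonempty (c.pt ≅ X) → (P X ↔ ∀ i, P (g i)))
    (hc₁ : ∀ (Jc : Type v) (_ : SmallCategory Jc) (D : Jc ⥤ C) (c : Cocone D),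
      Nonempty (IsColimit c) → (∀ j, P (D.obj j)) → P c.pt)
    (hc₂ : ∀ (Jc : Type v) (_ : SmallCategory Jc) (_ : FinCategory Jc)
      (D : Jc ⥤ C) (c : Cone D),
      Nonempty (IsLimit c) → (∀ j, P (D.obj j)) → P c.pt) :
    IsTameInfiniteGaloisCategory (ObjectProperty.FullSubcategory P)
      (ObjectProperty.ι P ⋙ F) := by
  obtain ⟨ι, g, hg⟩ := hC.exists_connected_representatives
  obtain ⟨_, _, hdecomp, -, _, _, ⟨_⟩, ⟨_⟩, htame⟩ := hC
  have := hasColimits_fullSubcategory hc₁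
  have := preservesColimits_ι hc₁
  have := hasFiniteLimits_fullSubcategory hc₂
  have := preservesFiniteLimits_ι hc₂
  have hdecomp' : ∀ X : ObjectProperty.FullSubcategory P, IsCoproductOfConnected X :=
    fun X => isCoproductOfConnected_fullSubcategory ha hb (hdecomp X.obj)
  refine ⟨inferInstance, inferInstance, hdecomp',
    exists_connected_generator_fullSubcategory hiso ha g hg hdecomp', inferInstance,
    inferInstance, ⟨comp_preservesColimits _ _⟩, ⟨comp_preservesFiniteLimits _ _⟩,
    fun X hX x y => ?_⟩
  obtain ⟨σ, hσ⟩ := htame X.obj ((ha X).1 hX) x y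
  exact ⟨Functor.isoWhiskerLeft (ObjectProperty.ι P) σ, hσ⟩
end
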